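/- Let I = (𝔼, D, c, f) be a CMP instance whose objective f is of type sum, product, or bottleneck, and let E = {e_1,…,e_k} ⊆ 𝔼. Then u_b'(I,E) ≤ min_{l=1,…,k} u'(I,e_l). -/

import Mathlib

open scoped ENNReal BigOperators

/-- Objective type of a combinatorial minimization problem:
sum, product, or bottleneck. -/
inductive ObjType where
  | sum : ObjType
  | prod : ObjType
  | bottleneck : ObjType
deriving DecidableEq

/-- The cost `f_c(S)` of a feasible solution `S` under cost function `c`:
the sum, the product, or the maximum (for nonempty `S`) of the element costs. -/
noncomputable def objCost {ι : Type*} (t : ObjType) (c : ι → ℝ) (S : Finset ι) : ℝ :=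
  match t with
  | ObjType.sum => ∑ e ∈ S, c e
  | ObjType.prod => ∏ e ∈ S, c e
  | ObjType.bottleneck => if h : S.Nonempty then S.sup' h c else 0

/-- The optimal objective value `f(I)` of the instance with feasible set `D`. -/
noncomputable def optVal {ι : Type*} (t : ObjType) (c : ι → ℝ) (D : Finset (Finset ι)) : ℝ :=
  if h : D.Nonempty then D.inf' h (objCost t c) else 0

/-- `S` is an optimal solution of the instance `(𝔼, D, c, f)`. -/
def isOpt {ι : Type*} (t : ObjType) (c : ι → ℝ) (D : Finset (Finset ι)) (S : Finset ι) : Prop :=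
  S ∈ D ∧ objCost t c S = optVal t c D

/-- `0 ≤ a < maxdec(e)`, where `maxdec(e) = ∞` for sum/bottleneck objectives and
`maxdec(e) = c(e)` for the product objective. -/
def decOK {ι : Type*} (t : ObjType) (c : ι → ℝ) (e : ι) (a : ℝ) : Prop :=
  0 ≤ a ∧ (t = ObjType.prod → a < c e)

/-- Extended single upper tolerance
`u'(I,e) = sup {α ≥ 0 : every optimal solution of I is optimal for I_{α,e}}` valued in `[0,∞]`. -/
noncomputable def uTol {ι : Type*} [DecidableEq ι] (t : ObjType) (c : ι → ℝ)
    (D : Finset (Finset ι)) (e : ι) : ℝ≥0∞ :=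
  sSup (ENNReal.ofReal '' {a : ℝ | 0 ≤ a ∧
    ∀ S : Finset ι, isOpt t c D S →
      isOpt t (fun x => if x = e then c x + a else c x) D S})

/-- Extended regular set upper tolerance `u'(I,E)`, valued in `[0,∞]`. -/
noncomputable def uTolSet {ι : Type*} [DecidableEq ι] (t : ObjType) (c : ι → ℝ)
    (D : Finset (Finset ι)) (E : Finset ι) : ℝ≥0∞ :=
  sSup (ENNReal.ofReal '' {a : ℝ |
    ∀ S : Finset ι, isOpt t c D S →
      ∃ α : ι → ℝ, (∀ x, 0 ≤ α x) ∧ (∀ x ∉ E, α x = 0) ∧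
        a = ∑ x ∈ E, α x ∧ isOpt t (fun x => c x + α x) D S})

/-- Extended reverse set upper tolerance `u_b'(I,E)`, valued in `[0,∞]` (`inf ∅ = ∞`). -/
noncomputable def uTolSetRev {ι : Type*} [DecidableEq ι] (t : ObjType) (c : ι → ℝ)
    (D : Finset (Finset ι)) (E : Finset ι) : ℝ≥0∞ :=
  sInf (ENNReal.ofReal '' {a : ℝ |
    ∃ S : Finset ι, isOpt t c D S ∧
      ∃ α : ι → ℝ, (∀ x, 0 ≤ α x) ∧ (∀ x ∉ E, α x = 0) ∧
        a = ∑ x ∈ E, α x ∧ ¬ isOpt t (fun x => c x + α x) D S})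

/-- New single lower tolerance
`l'(I,e) = sup {α : 0 ≤ α < maxdec(e), f(I_{−α,e}) = f(I)}`, valued in `[0,∞]`. -/
noncomputable def lTol {ι : Type*} [DecidableEq ι] (t : ObjType) (c : ι → ℝ)
    (D : Finset (Finset ι)) (e : ι) : ℝ≥0∞ :=
  sSup (ENNReal.ofReal '' {a : ℝ | decOK t c e a ∧
    optVal t (fun x => if x = e then c x - a else c x) D = optVal t c D})

/-- New regular set lower tolerance `l'(I,E)`, valued in `[0,∞]`. -/
noncomputable def lTolSet {ι : Type*} [DecidableEq ι] (t : ObjType) (c : ι → ℝ)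
    (D : Finset (Finset ι)) (E : Finset ι) : ℝ≥0∞ :=
  sSup (ENNReal.ofReal '' {a : ℝ |
    ∃ α : ι → ℝ, (∀ x ∈ E, decOK t c x (α x)) ∧ (∀ x ∉ E, α x = 0) ∧
      a = ∑ x ∈ E, α x ∧ optVal t (fun x => c x - α x) D = optVal t c D})

/-- New reverse set lower tolerance `l_b'(I,E)`, valued in `[0,∞]` (`inf ∅ = ∞`). -/
noncomputable def lTolSetRev {ι : Type*} [DecidableEq ι] (t : ObjType) (c : ι → ℝ)
    (D : Finset (Finset ι)) (E : Finset ι) : ℝ≥0∞ :=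
  sInf (ENNReal.ofReal '' {a : ℝ |
    ∃ α : ι → ℝ, (∀ x ∈ E, decOK t c x (α x)) ∧ (∀ x ∉ E, α x = 0) ∧
      a = ∑ x ∈ E, α x ∧ optVal t (fun x => c x - α x) D < optVal t c D})

/-!
If `α` exceeds the single upper tolerance `u'(I,e)` of some `e ∈ E`, then some optimal solution
stops being optimal once `c(e)` is raised by `α`. Putting all of `α` on `e` and nothing on the rest
of `E` is an admissible perturbation in the definition of `u_b'(I,E)`, so `u_b'(I,E) ≤ α`.
-/

section Tolerances

variable {ι : Type*} [DecidableEq ι] {t : ObjType} {c : ι → ℝ} {D : Finset (Finset ι)}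

theorem exists_isOpt_not_isOpt_of_uTol_lt {e : ι} {b : ℝ} (hb : 0 ≤ b)
    (h : uTol t c D e < ENNReal.ofReal b) :
    ∃ S, isOpt t c D S ∧ ¬ isOpt t (fun x => if x = e then c x + b else c x) D S := by
  by_contra! hall
  exact h.not_ge (le_sSup ⟨b, ⟨hb, hall⟩, rfl⟩)

theorem uTolSetRev_le_of_isOpt_not_isOpt {E : Finset ι} {e : ι} (he : e ∈ E) {b : ℝ}
    (hb : 0 ≤ b) {S : Finset ι} (hS : isOpt t c D S)
    (hS' : ¬ isOpt t (fun x => if x = e then c x + b else c x) D S) :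
    uTolSetRev t c D E ≤ ENNReal.ofReal b := by
  refine sInf_le ⟨b, ⟨S, hS, fun x => if x = e then b else 0, ?_, ?_, ?_, ?_⟩, rfl⟩
  · intro x
    by_cases hx : x = e <;> simp [hx, hb]
  · intro x hx
    exact if_neg (ne_of_mem_of_not_mem he hx).symm
  · simp [he]
  · simpa only [add_ite, add_zero] using hS'

theorem uTolSetRev_le_uTol {E : Finset ι} {e : ι} (he : e ∈ E) :
    uTolSetRev t c D E ≤ uTol t c D e := by
  refine le_of_forall_gt_imp_ge_of_dense fun r hr => ?_
  obtain ⟨b, hb, hlt, hbr⟩ := ENNReal.lt_iff_exists_real_btwn.1 hr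
  obtain ⟨S, hS, hS'⟩ := exists_isOpt_not_isOpt_of_uTol_lt hb hlt
  exact (uTolSetRev_le_of_isOpt_not_isOpt he hb hS hS').trans hbr.le

end Tolerances

theorem urv_le_min_general {ι : Type*} [DecidableEq ι]
    (t : ObjType) (c : ι → ℝ) (D : Finset (Finset ι))
    (E : Finset ι) :
    uTolSetRev t c D E ≤ E.inf fun e => uTol t c D e :=
  Finset.le_inf fun _ he => uTolSetRev_le_uTol he

/-- Theorem (reverse set upper tolerance, upper bound):
`u_b'(I,E) ≤ min_{l} u'(I,e_l)`. -/
theorem urv_le_min {ι : Type*} [Fintype ι] [DecidableEq ι]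
    (t : ObjType) (c : ι → ℝ) (D : Finset (Finset ι))
    (hD : D.Nonempty) (hSne : ∀ S ∈ D, S.Nonempty)
    (hpos : t = ObjType.prod → ∀ x, 0 < c x)
    (E : Finset ι) (hE : E.Nonempty) :
    uTolSetRev t c D E ≤ E.inf fun e => uTol t c D e :=
  urv_le_min_general t c D E
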